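/- Let (A,·,‾) be an algebra with involution over a field of characteristic ≠ 2. Then the Steinberg unitary Lie algebra stu₃(A,·,‾) admits an action of the symmetric group S₄ by Lie algebra automorphisms, determined by: τ₁: u₁₂(a) ↦ u₁₂(a), u₂₃(a) ↦ −u₂₃(a), u₃₁(a) ↦ −u₃₁(a); τ₂: u₁₂(a) ↦ −u₁₂(a), u₂₃(a) ↦ u₂₃(a), u₃₁(a) ↦ −u₃₁(a); φ: u₁₂(a) ↦ u₂₃(a), u₂₃(a) ↦ u₃₁(a), u₃₁(a) ↦ u₁₂(a); τ: u₁₂(a) ↦ −u₁₂(ā), u₂₃(a) ↦ −u₃₁(ā), u₃₁(a) ↦ −u₂₃(ā). These assignments respect the defining relations and the generated automorphisms satisfy the S₄ relations. -/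

import Mathlib

/-- Index type for the generators `u_{ij}(a)`, `1 ≤ i ≠ j ≤ 3`, `a ∈ A`. -/
abbrev StuGen (A : Type*) := {p : Fin 3 × Fin 3 // p.1 ≠ p.2} × A

/-- The defining relations of the Steinberg unitary Lie algebra `stu₃(A,·,‾)`:
`u_{ij}(a) = u_{ji}(−ā)`, linearity of `a ↦ u_{ij}(a)`, and
`[u_{ij}(a), u_{jk}(b)] = u_{ik}(a·b)` for distinct `i,j,k`. -/
def stuRels (F : Type*) [Field F] (A : Type*) [AddCommGroup A] [Module F A]
    (mul : A →ₗ[F] A →ₗ[F] A) (bar : A →ₗ[F] A) :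
    Set (FreeLieAlgebra F (StuGen A)) :=
  {z | ∃ (i j : Fin 3) (h : i ≠ j) (a : A),
      z = FreeLieAlgebra.of F ((⟨(i, j), h⟩ : {p : Fin 3 × Fin 3 // p.1 ≠ p.2}), a)
        - FreeLieAlgebra.of F ((⟨(j, i), h.symm⟩ : {p : Fin 3 × Fin 3 // p.1 ≠ p.2}), -(bar a))} ∪
  {z | ∃ (i j : Fin 3) (h : i ≠ j) (a b : A),
      z = FreeLieAlgebra.of F ((⟨(i, j), h⟩ : {p : Fin 3 × Fin 3 // p.1 ≠ p.2}), a + b)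
        - FreeLieAlgebra.of F ((⟨(i, j), h⟩ : {p : Fin 3 × Fin 3 // p.1 ≠ p.2}), a)
        - FreeLieAlgebra.of F ((⟨(i, j), h⟩ : {p : Fin 3 × Fin 3 // p.1 ≠ p.2}), b)} ∪
  {z | ∃ (i j : Fin 3) (h : i ≠ j) (c : F) (a : A),
      z = FreeLieAlgebra.of F ((⟨(i, j), h⟩ : {p : Fin 3 × Fin 3 // p.1 ≠ p.2}), c • a)
        - c • FreeLieAlgebra.of F ((⟨(i, j), h⟩ : {p : Fin 3 × Fin 3 // p.1 ≠ p.2}), a)} ∪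
  {z | ∃ (i j k : Fin 3) (hij : i ≠ j) (hjk : j ≠ k) (hik : i ≠ k) (a b : A),
      z = ⁅FreeLieAlgebra.of F ((⟨(i, j), hij⟩ : {p : Fin 3 × Fin 3 // p.1 ≠ p.2}), a),
           FreeLieAlgebra.of F ((⟨(j, k), hjk⟩ : {p : Fin 3 × Fin 3 // p.1 ≠ p.2}), b)⁆
        - FreeLieAlgebra.of F ((⟨(i, k), hik⟩ : {p : Fin 3 × Fin 3 // p.1 ≠ p.2}), mul a b)}

/-- The ideal of relations. -/
noncomputable def stuIdeal (F : Type*) [Field F] (A : Type*) [AddCommGroup A] [Module F A]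
    (mul : A →ₗ[F] A →ₗ[F] A) (bar : A →ₗ[F] A) :
    LieIdeal F (FreeLieAlgebra F (StuGen A)) :=
  LieSubmodule.lieSpan F (FreeLieAlgebra F (StuGen A)) (stuRels F A mul bar)

/-- The Steinberg unitary Lie algebra `stu₃(A,·,‾)`. -/
abbrev Stu (F : Type*) [Field F] (A : Type*) [AddCommGroup A] [Module F A]
    (mul : A →ₗ[F] A →ₗ[F] A) (bar : A →ₗ[F] A) :=
  FreeLieAlgebra F (StuGen A) ⧸ stuIdeal F A mul bar

/-- The generator `u_{ij}(a)` of `stu₃(A,·,‾)`. -/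
noncomputable def uGen {F : Type*} [Field F] {A : Type*} [AddCommGroup A] [Module F A]
    (mul : A →ₗ[F] A →ₗ[F] A) (bar : A →ₗ[F] A)
    (i j : Fin 3) (h : i ≠ j) (a : A) : Stu F A mul bar :=
  LieSubmodule.Quotient.mk (N := stuIdeal F A mul bar)
    (FreeLieAlgebra.of F ((⟨(i, j), h⟩ : {p : Fin 3 × Fin 3 // p.1 ≠ p.2}), a))

/-!
A signed permutation `(σ, ε)` of the indices, `σ ∈ S₃`, `ε : Fin 3 → {±1}`, acts on `stu₃` by
`u_{ij}(a) ↦ ε_i ε_j u_{σ(i) σ(j)}(a)`: the defining relations are visibly preserved, since the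
product `ε_i ε_j ⬝ ε_j ε_k = ε_i ε_k` matches the bracket relation. This is an action of the
group `{±1}³ ⋊ S₃` in which `ε` and `-ε` act alike, so the quotient `{±1}³/{±1} ⋊ S₃ ≅ S₄`
acts. Here `τ₁, τ₂` are sign changes, `φ` is the 3-cycle, and `τ` is the transposition of the
first two indices: by the relation `u_{ji}(a) = u_{ij}(-ā)`, permuting `u_{12}(a) ↦ u_{21}(a)`
is the same as `u_{12}(a) ↦ -u_{12}(ā)`. The `S₄` relations thus become identities between
explicit signed permutations, which are decided by computation.
-/

namespace LieIdeal

variable {R L L' : Type*} [CommRing R] [LieRing L] [LieAlgebra R L] [LieRing L'] [LieAlgebra R L']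
  (I : LieIdeal R L)

noncomputable def mkQ : L →ₗ⁅R⁆ L ⧸ I where
  toLinearMap := I.toSubmodule.mkQ
  map_lie' := rfl

noncomputable def liftQ (f : L →ₗ⁅R⁆ L') (h : I ≤ f.ker) : L ⧸ I →ₗ⁅R⁆ L' where
  toLinearMap := I.toSubmodule.liftQ f.toLinearMap fun _ hx => LieHom.mem_ker.mp (h hx)
  map_lie' := by
    rintro ⟨x⟩ ⟨y⟩
    exact f.map_lie x y

lemma quotient_hom_ext {f g : L ⧸ I →ₗ⁅R⁆ L'} (h : f.comp I.mkQ = g.comp I.mkQ) : f = g := by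
  ext ⟨x⟩
  exact LieHom.congr_fun h x

end LieIdeal

namespace Stu

variable {F : Type*} [Field F] {A : Type*} [AddCommGroup A] [Module F A]
  {mul : A →ₗ[F] A →ₗ[F] A} {bar : A →ₗ[F] A}

lemma mk_eq_zero_of_mem_stuRels {z : FreeLieAlgebra F (StuGen A)}
    (hz : z ∈ stuRels F A mul bar) : (LieSubmodule.Quotient.mk z : Stu F A mul bar) = 0 :=
  LieSubmodule.Quotient.mk_eq_zero'.mpr (LieSubmodule.subset_lieSpan hz)

lemma uGen_symm (i j : Fin 3) (h : i ≠ j) (a : A) :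
    uGen mul bar i j h a = uGen mul bar j i h.symm (-bar a) :=
  sub_eq_zero.mp (mk_eq_zero_of_mem_stuRels (.inl (.inl (.inl ⟨i, j, h, a, rfl⟩))))

lemma uGen_add (i j : Fin 3) (h : i ≠ j) (a b : A) :
    uGen mul bar i j h (a + b) = uGen mul bar i j h a + uGen mul bar i j h b := by
  rw [← sub_eq_zero, ← sub_sub]
  exact mk_eq_zero_of_mem_stuRels (.inl (.inl (.inr ⟨i, j, h, a, b, rfl⟩)))

lemma uGen_smul (i j : Fin 3) (h : i ≠ j) (c : F) (a : A) :
    uGen mul bar i j h (c • a) = c • uGen mul bar i j h a :=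
  sub_eq_zero.mp (mk_eq_zero_of_mem_stuRels (.inl (.inr ⟨i, j, h, c, a, rfl⟩)))

lemma lie_uGen_uGen (i j k : Fin 3) (hij : i ≠ j) (hjk : j ≠ k) (hik : i ≠ k) (a b : A) :
    ⁅uGen mul bar i j hij a, uGen mul bar j k hjk b⁆ = uGen mul bar i k hik (mul a b) :=
  sub_eq_zero.mp (mk_eq_zero_of_mem_stuRels (.inr ⟨i, j, k, hij, hjk, hik, a, b, rfl⟩))

variable (mul bar) in
noncomputable def uGenₗ (i j : Fin 3) (h : i ≠ j) : A →ₗ[F] Stu F A mul bar where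
  toFun := uGen mul bar i j h
  map_add' := uGen_add i j h
  map_smul' := uGen_smul i j h

@[simp]
lemma uGenₗ_apply (i j : Fin 3) (h : i ≠ j) (a : A) :
    uGenₗ mul bar i j h a = uGen mul bar i j h a :=
  rfl

lemma uGen_eq_neg_uGen_bar (i j : Fin 3) (h : i ≠ j) (a : A) :
    uGen mul bar i j h a = -uGen mul bar j i h.symm (bar a) := by
  rw [uGen_symm, ← uGenₗ_apply, map_neg, uGenₗ_apply]

section Lift

variable {L : Type*} [LieRing L] [LieAlgebra F L] (f : ∀ i j : Fin 3, i ≠ j → A →ₗ[F] L)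
  (map_symm : ∀ i j (h : i ≠ j) a, f i j h a = f j i h.symm (-bar a))
  (map_lie : ∀ i j k (hij : i ≠ j) (hjk : j ≠ k) (hik : i ≠ k) a b,
    ⁅f i j hij a, f j k hjk b⁆ = f i k hik (mul a b))

noncomputable def lift : Stu F A mul bar →ₗ⁅F⁆ L :=
  (stuIdeal F A mul bar).liftQ (FreeLieAlgebra.lift F fun p => f _ _ p.1.2 p.2) <| by
    refine LieSubmodule.lieSpan_le.mpr ?_
    rintro z (((⟨i, j, h, a, rfl⟩ | ⟨i, j, h, a, b, rfl⟩) | ⟨i, j, h, c, a, rfl⟩) |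
      ⟨i, j, k, hij, hjk, hik, a, b, rfl⟩) <;>
    simp only [SetLike.mem_coe, LieHom.mem_ker, map_sub, map_smul, LieHom.map_lie,
      FreeLieAlgebra.lift_of_apply, sub_eq_zero, map_add, add_sub_cancel_left]
    · exact map_symm i j h a
    · exact map_lie i j k hij hjk hik a b

@[simp]
lemma lift_uGen (i j : Fin 3) (h : i ≠ j) (a : A) :
    lift f map_symm map_lie (uGen mul bar i j h a) = f i j h a :=
  FreeLieAlgebra.lift_of_apply _ _

lemma hom_ext {g₁ g₂ : Stu F A mul bar →ₗ⁅F⁆ L}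
    (h : ∀ i j (hij : i ≠ j) a, g₁ (uGen mul bar i j hij a) = g₂ (uGen mul bar i j hij a)) :
    g₁ = g₂ :=
  LieIdeal.quotient_hom_ext _ <| FreeLieAlgebra.hom_ext fun ⟨⟨(i, j), hij⟩, a⟩ => h i j hij a

end Lift

noncomputable def signedPerm (σ : Equiv.Perm (Fin 3)) (ε : Fin 3 → ℤˣ) :
    Stu F A mul bar →ₗ⁅F⁆ Stu F A mul bar :=
  lift (fun i j h => (ε i * ε j) • uGenₗ mul bar (σ i) (σ j) (σ.injective.ne h))
    (fun i j h a => by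
      simp only [LinearMap.smul_apply, uGenₗ_apply, mul_comm (ε i)]
      rw [uGen_symm])
    (fun i j k hij hjk hik a b => by
      have hsign : ε j * ε k * (ε i * ε j) = ε i * ε k := by
        calc ε j * ε k * (ε i * ε j) = ε i * ε k * (ε j * ε j) := by ac_rfl
          _ = ε i * ε k := by rw [Int.units_mul_self, mul_one]
      simp only [LinearMap.smul_apply, uGenₗ_apply, Units.smul_def, zsmul_lie, lie_zsmul,
        lie_uGen_uGen _ _ _ _ _ (σ.injective.ne hik), smul_smul, ← Units.val_mul, hsign])

@[simp]
lemma signedPerm_uGen (σ : Equiv.Perm (Fin 3)) (ε : Fin 3 → ℤˣ) (i j : Fin 3) (h : i ≠ j)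
    (a : A) :
    signedPerm σ ε (uGen mul bar i j h a)
      = (ε i * ε j) • uGen mul bar (σ i) (σ j) (σ.injective.ne h) a :=
  lift_uGen _ _ _ i j h a

lemma signedPerm_signedPerm (σ τ : Equiv.Perm (Fin 3)) (ε η : Fin 3 → ℤˣ)
    (z : Stu F A mul bar) :
    signedPerm σ ε (signedPerm τ η z) = signedPerm (σ * τ) (fun i => ε (τ i) * η i) z := by
  suffices (signedPerm σ ε).comp (signedPerm τ η)
      = signedPerm (mul := mul) (bar := bar) (σ * τ) (fun i => ε (τ i) * η i) from
    LieHom.congr_fun this z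
  refine hom_ext fun i j h a => ?_
  simp only [LieHom.comp_apply, signedPerm_uGen, map_zsmul_unit, smul_smul]
  exact congrArg (· • _) (by ac_rfl)

lemma signedPerm_congr {σ σ' : Equiv.Perm (Fin 3)} {ε ε' : Fin 3 → ℤˣ} (hσ : σ = σ')
    (hε : ∀ i j, i ≠ j → ε i * ε j = ε' i * ε' j) (z : Stu F A mul bar) :
    signedPerm σ ε z = signedPerm σ' ε' z := by
  subst hσ
  suffices signedPerm σ ε = signedPerm (mul := mul) (bar := bar) σ ε' from
    LieHom.congr_fun this z
  exact hom_ext fun i j h a => by simp only [signedPerm_uGen, hε i j h]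

lemma signedPerm_one (z : Stu F A mul bar) : signedPerm 1 1 z = z := by
  suffices signedPerm (mul := mul) (bar := bar) 1 1 = LieHom.id from LieHom.congr_fun this z
  exact hom_ext fun i j h a => by simp

lemma signedPerm_inv_signedPerm (σ : Equiv.Perm (Fin 3)) (ε : Fin 3 → ℤˣ)
    (z : Stu F A mul bar) : signedPerm σ⁻¹ (fun i => ε (σ⁻¹ i)) (signedPerm σ ε z) = z := by
  rw [signedPerm_signedPerm]
  exact (signedPerm_congr (inv_mul_cancel σ) (by simp [Int.units_mul_self]) z).trans
    (signedPerm_one z)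

lemma signedPerm_signedPerm_inv (σ : Equiv.Perm (Fin 3)) (ε : Fin 3 → ℤˣ)
    (z : Stu F A mul bar) : signedPerm σ ε (signedPerm σ⁻¹ (fun i => ε (σ⁻¹ i)) z) = z := by
  rw [signedPerm_signedPerm]
  exact (signedPerm_congr (mul_inv_cancel σ) (by simp [Int.units_mul_self]) z).trans
    (signedPerm_one z)

noncomputable def signedPermEquiv (σ : Equiv.Perm (Fin 3)) (ε : Fin 3 → ℤˣ) :
    Stu F A mul bar ≃ₗ⁅F⁆ Stu F A mul bar :=
  { signedPerm σ ε with
    invFun := signedPerm σ⁻¹ fun i => ε (σ⁻¹ i)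
    left_inv := signedPerm_inv_signedPerm σ ε
    right_inv := signedPerm_signedPerm_inv σ ε }

@[simp]
lemma signedPermEquiv_apply (σ : Equiv.Perm (Fin 3)) (ε : Fin 3 → ℤˣ) (z : Stu F A mul bar) :
    signedPermEquiv σ ε z = signedPerm σ ε z :=
  rfl

end Stu

/-- For any algebra with involution `(A,·,‾)` over a field of characteristic `≠ 2`,
the Steinberg unitary Lie algebra `stu₃(A,·,‾)` admits an action of `S₄` by Lie
algebra automorphisms, determined on the generators by the prescribed formulas,
the generated automorphisms satisfying the `S₄` relations. -/
theorem stmt16 (F : Type*) [Field F]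
    (A : Type*) [AddCommGroup A] [Module F A]
    (mul : A →ₗ[F] A →ₗ[F] A) (bar : A →ₗ[F] A) :
    ∃ T₁ T₂ Φ T : Stu F A mul bar ≃ₗ⁅F⁆ Stu F A mul bar,
      (∀ a : A, T₁ (uGen mul bar 0 1 (by decide) a) = uGen mul bar 0 1 (by decide) a) ∧
      (∀ a : A, T₁ (uGen mul bar 1 2 (by decide) a) = -uGen mul bar 1 2 (by decide) a) ∧
      (∀ a : A, T₁ (uGen mul bar 2 0 (by decide) a) = -uGen mul bar 2 0 (by decide) a) ∧
      (∀ a : A, T₂ (uGen mul bar 0 1 (by decide) a) = -uGen mul bar 0 1 (by decide) a) ∧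
      (∀ a : A, T₂ (uGen mul bar 1 2 (by decide) a) = uGen mul bar 1 2 (by decide) a) ∧
      (∀ a : A, T₂ (uGen mul bar 2 0 (by decide) a) = -uGen mul bar 2 0 (by decide) a) ∧
      (∀ a : A, Φ (uGen mul bar 0 1 (by decide) a) = uGen mul bar 1 2 (by decide) a) ∧
      (∀ a : A, Φ (uGen mul bar 1 2 (by decide) a) = uGen mul bar 2 0 (by decide) a) ∧
      (∀ a : A, Φ (uGen mul bar 2 0 (by decide) a) = uGen mul bar 0 1 (by decide) a) ∧
      (∀ a : A, T (uGen mul bar 0 1 (by decide) a) = -uGen mul bar 0 1 (by decide) (bar a)) ∧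
      (∀ a : A, T (uGen mul bar 1 2 (by decide) a) = -uGen mul bar 2 0 (by decide) (bar a)) ∧
      (∀ a : A, T (uGen mul bar 2 0 (by decide) a) = -uGen mul bar 1 2 (by decide) (bar a)) ∧
      (∀ z, T₁ (T₁ z) = z) ∧ (∀ z, T₂ (T₂ z) = z) ∧ (∀ z, T (T z) = z) ∧
      (∀ z, Φ (Φ (Φ z)) = z) ∧
      (∀ z, T₁ (T₂ z) = T₂ (T₁ z)) ∧
      (∀ z, Φ (T₁ z) = T₂ (Φ z)) ∧
      (∀ z, Φ (T₂ z) = T₁ (T₂ (Φ z))) ∧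
      (∀ z, T₁ (T z) = T (T₁ z)) ∧
      (∀ z, T₂ (T z) = T (T₂ (T₁ z))) ∧
      (∀ z, T (Φ z) = Φ (Φ (T z))) := by
  refine ⟨Stu.signedPermEquiv 1 ![1, 1, -1], Stu.signedPermEquiv 1 ![-1, 1, 1],
    Stu.signedPermEquiv (finRotate 3) 1, Stu.signedPermEquiv (Equiv.swap 0 1) 1,
    fun a => ?_, fun a => ?_, fun a => ?_, fun a => ?_, fun a => ?_, fun a => ?_,
    fun a => ?_, fun a => ?_, fun a => ?_, fun a => ?_, fun a => ?_, fun a => ?_,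
    fun z => ?_, fun z => ?_, fun z => ?_, fun z => ?_, fun z => ?_, fun z => ?_,
    fun z => ?_, fun z => ?_, fun z => ?_, fun z => ?_⟩
  all_goals simp only [Stu.signedPermEquiv_apply, Stu.signedPerm_uGen, Stu.signedPerm_signedPerm]
  all_goals first
    | exact Stu.signedPerm_congr (by decide) (by decide) z
    | exact (Stu.signedPerm_congr (by decide) (by decide) z).trans (Stu.signedPerm_one z)
    | simp [Equiv.swap_apply_of_ne_of_ne]
  -- left over: the values of `τ`, which produce `u_{ji}(a)` where `-u_{ij}(ā)` is asked for
  all_goals exact Stu.uGen_eq_neg_uGen_bar _ _ _ _
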